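/- arXiv:2203.06713 — 4 statements merged into one kernel-verified Lean document; each statement's English description precedes it below -/
import Mathlib

section
/- Let F be a field, q ∈ F, n ≥ 1, and w₁,…,w_n ∈ F with w_i ≠ q·w_j for all i ≠ j. For a,b ∈ F with q·a ≠ b set S(a,b) = −(q·b − a)/(q·a − b). Then ∑_{σ ∈ S_n} ∏_{1 ≤ i < j ≤ n, σ(i) > σ(j)} S(w_j, w_i) = [n]_q! · ∏_{1 ≤ i < j ≤ n} (w_i − w_j)/(w_i − q·w_j), where the sum is over all permutations σ of {1,…,n}, [k]_q = 1 + q + ⋯ + q^{k−1}, and [n]_q! = [1]_q·[2]_q⋯[n]_q. (In the paper's notation the left-hand side is ∑_σ A_σ(w_{σ⁻¹(1)},…,w_{σ⁻¹(n)}), where A_σ = ∏_{σ(i)>σ(j), i<j} S(w_{σ(j)}, w_{σ(i)}).) -/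
/-!
Multiplying both sides by `∏_{i<j} (w_i - q w_j)` turns the identity into the polynomial identity
`∑_σ ∏_{i<j} (q w_i - w_j if σ inverts (i, j), else w_i - q w_j) = [n]_q! ∏_{i<j} (w_i - w_j)`.
It is proved by induction on `n`, sorting the permutations by the position `p` at which they take
their smallest value. The inductive step is the identity
`∑_p ∏_{j ≠ p} (w_p - q w_j) / (w_p - w_j) = [n]_q`, which comes from Lagrange interpolation of
`∏_j (X - q w_j) - ∏_j (X - w_j)` at the nodes `w_j`, evaluated at `0`. Being polynomial, that
step only has to be checked for generic `q` and `w`.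
-/

open Finset Equiv

def ltPairs (n : ℕ) : Finset (Fin n × Fin n) := univ.filter fun x => x.1 < x.2

theorem prod_ltPairs_eq_prod_prod_ite {M : Type*} [CommMonoid M] {n : ℕ}
    (f : Fin n × Fin n → M) :
    ∏ x ∈ ltPairs n, f x = ∏ i, ∏ j, if i < j then f (i, j) else 1 := by
  rw [ltPairs, prod_filter, Fintype.prod_prod_type]

theorem prod_ltPairs_succAbove {M : Type*} [CommMonoid M] {n : ℕ} (p : Fin (n + 1))
    (f : Fin (n + 1) × Fin (n + 1) → M) :
    ∏ x ∈ ltPairs (n + 1), f x =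
      (∏ j ∈ Ioi p, f (p, j)) *
        ((∏ i ∈ Iio p, f (i, p)) * ∏ x ∈ ltPairs n, f (p.succAbove x.1, p.succAbove x.2)) := by
  rw [← filter_gt_eq_Iio, ← filter_lt_eq_Ioi, prod_filter, prod_filter,
    Fin.prod_univ_succAbove (fun i => if i < p then f (i, p) else 1) p,
    prod_ltPairs_eq_prod_prod_ite (fun x => f (p.succAbove x.1, p.succAbove x.2)),
    prod_ltPairs_eq_prod_prod_ite]
  simp only [Fin.prod_univ_succAbove _ p, lt_irrefl, if_false, one_mul,
    Fin.succAbove_lt_succAbove_iff, prod_mul_distrib]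

theorem Fin.prod_Ioi_mul_prod_Iio_eq_prod_erase {M : Type*} [CommMonoid M] {m : ℕ}
    (p : Fin m) (g : Fin m → M) :
    (∏ j ∈ Ioi p, g j) * ∏ i ∈ Iio p, g i = ∏ j ∈ univ.erase p, g j := by
  rw [← prod_union (disjoint_left.mpr fun j hj hj' => (mem_Ioi.mp hj).not_gt (mem_Iio.mp hj'))]
  congr 1
  ext j
  simp only [mem_union, mem_Ioi, mem_Iio, mem_erase, mem_univ, and_true, ne_comm (a := j)]
  exact lt_or_lt_iff_ne

def insertZeroAt {n : ℕ} (p : Fin (n + 1)) (τ : Perm (Fin n)) : Perm (Fin (n + 1)) :=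
  ((finSuccEquiv' p).trans (optionCongr τ)).trans (finSuccEquiv n).symm

@[simp]
theorem insertZeroAt_apply_self {n : ℕ} (p : Fin (n + 1)) (τ : Perm (Fin n)) :
    insertZeroAt p τ p = 0 := by
  simp [insertZeroAt, finSuccEquiv'_at]

@[simp]
theorem insertZeroAt_apply_succAbove {n : ℕ} (p : Fin (n + 1)) (τ : Perm (Fin n)) (a : Fin n) :
    insertZeroAt p τ (p.succAbove a) = (τ a).succ := by
  simp [insertZeroAt, finSuccEquiv'_succAbove, finSuccEquiv_symm_some]

theorem bijective_insertZeroAt (n : ℕ) :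
    Function.Bijective fun x : Fin (n + 1) × Perm (Fin n) => insertZeroAt x.1 x.2 := by
  rw [Fintype.bijective_iff_injective_and_card]
  refine ⟨fun ⟨p, τ⟩ ⟨p', τ'⟩ h => ?_, by simp [Fintype.card_perm, Nat.factorial_succ]⟩
  simp only at h
  obtain rfl : p = p' := (insertZeroAt p τ).injective <| by
    rw [insertZeroAt_apply_self, h, insertZeroAt_apply_self]
  obtain rfl : τ = τ' := Equiv.ext fun a => Fin.succ_injective _ <| by
    rw [← insertZeroAt_apply_succAbove, h, insertZeroAt_apply_succAbove]
  rfl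

def inversionWeight {R : Type*} [CommRing R] (q : R) {n : ℕ} (w : Fin n → R)
    (σ : Perm (Fin n)) : R :=
  ∏ x ∈ ltPairs n, if σ x.2 < σ x.1 then q * w x.1 - w x.2 else w x.1 - q * w x.2

def insertionFactor {R : Type*} [CommRing R] (q : R) {n : ℕ} (w : Fin n → R) (p : Fin n) : R :=
  (∏ j ∈ Ioi p, (w p - q * w j)) * ∏ i ∈ Iio p, (q * w i - w p)

theorem inversionWeight_insertZeroAt {R : Type*} [CommRing R] (q : R) {n : ℕ}
    (w : Fin (n + 1) → R) (p : Fin (n + 1)) (τ : Perm (Fin n)) :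
    inversionWeight q w (insertZeroAt p τ) =
      insertionFactor q w p * inversionWeight q (w ∘ p.succAbove) τ := by
  have hpos : ∀ i ∈ Iio p, 0 < insertZeroAt p τ i := fun i hi =>
    Fin.pos_iff_ne_zero.mpr fun h0 => (mem_Iio.mp hi).ne <|
      (insertZeroAt p τ).injective (h0.trans (insertZeroAt_apply_self p τ).symm)
  rw [inversionWeight, prod_ltPairs_succAbove p, insertionFactor, mul_assoc]
  refine congr_arg₂ (· * ·) (prod_congr rfl fun j _ => by simp)
    (congr_arg₂ (· * ·) (prod_congr rfl fun i hi => by simp [hpos i hi]) ?_)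
  simp [inversionWeight, Fin.succ_lt_succ_iff]

open Polynomial in
/-- Interpolate `g - N`, where `g = ∏_j (X - q v_j)` and `N = ∏_j (X - v_j)`, at the nodes `v_i`
and evaluate at `0`; the `i`-th term carries `g (v_i) = (1 - q) v_i ∏_{j ≠ i} (v_i - q v_j)`. -/
theorem sum_prod_erase_sub_mul_div_sub_eq_geom_sum {ι K : Type*} [Field K] [DecidableEq ι]
    {s : Finset ι} {v : ι → K} (q : K) (hq : q ≠ 1) (hvs : Set.InjOn v s)
    (hv : ∀ i ∈ s, v i ≠ 0) :
    ∑ i ∈ s, ∏ j ∈ s.erase i, (v i - q * v j) / (v i - v j) = ∑ k ∈ range #s, q ^ k := by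
  set g := Lagrange.nodal s (fun j => q * v j)
  set N := Lagrange.nodal s v
  have hdeg : (g - N).degree < #s := by
    have := degree_sub_lt_left (p := g) (q := N)
      (by rw [Lagrange.degree_nodal, Lagrange.degree_nodal]) Lagrange.nodal_monic.ne_zero
      (Lagrange.nodal_monic.leadingCoeff.trans Lagrange.nodal_monic.leadingCoeff.symm)
    rwa [Lagrange.degree_nodal] at this
  have h := congrArg (eval 0) (Lagrange.eq_interpolate hvs hdeg)
  rw [Lagrange.eval_interpolate_not_at_node _ fun i hi => (hv i hi).symm] at h
  have hN0 : N.eval 0 ≠ 0 := Lagrange.eval_nodal_not_at_node fun i hi => (hv i hi).symm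
  have hg0 : g.eval 0 = q ^ #s * N.eval 0 := by
    simp only [g, N, Lagrange.eval_nodal, ← prod_const, ← prod_mul_distrib]
    exact prod_congr rfl fun _ _ => by ring
  have hterm : ∀ i ∈ s, Lagrange.nodalWeight s v i * (0 - v i)⁻¹ * (g - N).eval (v i) =
      (q - 1) * ∏ j ∈ s.erase i, (v i - q * v j) / (v i - v j) := by
    intro i hi
    rw [eval_sub, Lagrange.eval_nodal_at_node hi, sub_zero, Lagrange.eval_nodal,
      ← mul_prod_erase s _ hi, Lagrange.nodalWeight]
    simp only [div_eq_mul_inv, prod_mul_distrib]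
    field_simp [hv i hi]
    ring
  rw [sum_congr rfl hterm, ← mul_sum, eval_sub, hg0, ← sub_one_mul, mul_comm] at h
  rw [geom_sum_eq hq, eq_div_iff (sub_ne_zero.mpr hq)]
  linear_combination (mul_left_cancel₀ hN0 h).symm

theorem insertionFactor_mul_prod_ltPairs_succAbove_sub {K : Type*} [Field K] (q : K) {n : ℕ}
    {w : Fin (n + 1) → K} (hw : Function.Injective w) (p : Fin (n + 1)) :
    insertionFactor q w p * ∏ x ∈ ltPairs n, (w (p.succAbove x.1) - w (p.succAbove x.2)) =
      (∏ j ∈ univ.erase p, (w p - q * w j) / (w p - w j)) *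
        ∏ x ∈ ltPairs (n + 1), (w x.1 - w x.2) := by
  have hsub : ∀ {i j}, i ≠ j → w i - w j ≠ 0 := fun h => sub_ne_zero.mpr (hw.ne h)
  have hIoi : ∏ j ∈ Ioi p, (w p - q * w j) =
      (∏ j ∈ Ioi p, (w p - q * w j) / (w p - w j)) * ∏ j ∈ Ioi p, (w p - w j) := by
    rw [← prod_mul_distrib]
    exact prod_congr rfl fun j hj => (div_mul_cancel₀ _ (hsub (mem_Ioi.mp hj).ne)).symm
  have hIio : ∏ i ∈ Iio p, (q * w i - w p) =
      (∏ i ∈ Iio p, (w p - q * w i) / (w p - w i)) * ∏ i ∈ Iio p, (w i - w p) := by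
    rw [← prod_mul_distrib]
    refine prod_congr rfl fun i hi => ?_
    rw [← neg_sub, ← neg_sub (w p), mul_neg, div_mul_cancel₀ _ (hsub (mem_Iio.mp hi).ne')]
  rw [prod_ltPairs_succAbove p, insertionFactor, hIoi, hIio,
    ← Fin.prod_Ioi_mul_prod_Iio_eq_prod_erase]
  ring

theorem sum_insertionFactor_mul_prod_ltPairs_sub_of_field {K : Type*} [Field K] {q : K}
    (hq : q ≠ 1) {n : ℕ} {w : Fin (n + 1) → K} (hw : Function.Injective w) (hw0 : ∀ i, w i ≠ 0) :
    ∑ p, insertionFactor q w p * ∏ x ∈ ltPairs n, (w (p.succAbove x.1) - w (p.succAbove x.2)) =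
      (∑ k ∈ range (n + 1), q ^ k) * ∏ x ∈ ltPairs (n + 1), (w x.1 - w x.2) := by
  simp only [insertionFactor_mul_prod_ltPairs_succAbove_sub q hw, ← sum_mul]
  rw [sum_prod_erase_sub_mul_div_sub_eq_geom_sum q hq hw.injOn fun i _ => hw0 i, card_univ,
    Fintype.card_fin]

/-- Both sides are integer polynomials in `q` and `w`, so it suffices to prove the identity at the
generic point of the fraction field of `ℤ[q, w₀, …, wₙ]`, where the field version applies. -/
theorem sum_insertionFactor_mul_prod_ltPairs_sub {R : Type*} [CommRing R] (q : R) {n : ℕ}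
    (w : Fin (n + 1) → R) :
    ∑ p, insertionFactor q w p * ∏ x ∈ ltPairs n, (w (p.succAbove x.1) - w (p.succAbove x.2)) =
      (∑ k ∈ range (n + 1), q ^ k) * ∏ x ∈ ltPairs (n + 1), (w x.1 - w x.2) := by
  let A := MvPolynomial (Option (Fin (n + 1))) ℤ
  let φ := algebraMap A (FractionRing A)
  have hφ : Function.Injective φ := IsFractionRing.injective _ _
  let Q : A := MvPolynomial.X none
  let W : Fin (n + 1) → A := fun i => MvPolynomial.X (some i)
  have hQ : φ Q ≠ 1 := fun h => by
    simpa [Q] using congrArg (MvPolynomial.eval 0) (hφ (h.trans (map_one φ).symm))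
  have hW : Function.Injective (φ ∘ W) :=
    hφ.comp ((MvPolynomial.X_injective (R := ℤ)).comp (Option.some_injective _))
  have hW0 : ∀ i, (φ ∘ W) i ≠ 0 := fun i =>
    (map_ne_zero_iff φ hφ).mpr (MvPolynomial.X_ne_zero _)
  have generic := sum_insertionFactor_mul_prod_ltPairs_sub_of_field hQ hW hW0
  simp only [insertionFactor, Function.comp_apply, ← map_mul, ← map_sub, ← map_prod, ← map_sum,
    ← map_pow] at generic
  simpa [insertionFactor, Q, W] using
    congrArg (MvPolynomial.aeval fun o => o.elim q w) (hφ generic)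

theorem sum_inversionWeight {R : Type*} [CommRing R] (q : R) :
    ∀ {n : ℕ} (w : Fin n → R), ∑ σ, inversionWeight q w σ =
      (∏ k ∈ range n, ∑ i ∈ range (k + 1), q ^ i) * ∏ x ∈ ltPairs n, (w x.1 - w x.2)
  | 0, w => by simp [inversionWeight, ltPairs]
  | n + 1, w => by
    calc ∑ σ, inversionWeight q w σ
        = ∑ x : Fin (n + 1) × Perm (Fin n), inversionWeight q w (insertZeroAt x.1 x.2) :=
          (Fintype.sum_bijective _ (bijective_insertZeroAt n) _ _ fun _ => rfl).symm
      _ = (∏ k ∈ range n, ∑ i ∈ range (k + 1), q ^ i) *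
            ∑ p, insertionFactor q w p *
              ∏ x ∈ ltPairs n, (w (p.succAbove x.1) - w (p.succAbove x.2)) := by
          rw [Fintype.sum_prod_type, mul_sum]
          refine sum_congr rfl fun p _ => ?_
          simp only [inversionWeight_insertZeroAt, ← mul_sum,
            sum_inversionWeight q (w ∘ p.succAbove), Function.comp_apply]
          ring
      _ = (∏ k ∈ range (n + 1), ∑ i ∈ range (k + 1), q ^ i) *
            ∏ x ∈ ltPairs (n + 1), (w x.1 - w x.2) := by
          rw [sum_insertionFactor_mul_prod_ltPairs_sub, prod_range_succ, mul_assoc]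

theorem prod_inversions_mul_eq_inversionWeight {F : Type*} [Field F] {q : F} {n : ℕ}
    {w : Fin n → F} (hw : ∀ i j, i < j → w i ≠ q * w j) (σ : Perm (Fin n)) :
    (∏ x ∈ univ.filter (fun x : Fin n × Fin n => x.1 < x.2 ∧ σ x.2 < σ x.1),
        -(q * w x.1 - w x.2) / (q * w x.2 - w x.1)) * ∏ x ∈ ltPairs n, (w x.1 - q * w x.2)
      = inversionWeight q w σ := by
  rw [← filter_filter, ← ltPairs, prod_filter, ← prod_mul_distrib, inversionWeight]
  refine prod_congr rfl fun x hx => ?_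
  have hx' : w x.1 - q * w x.2 ≠ 0 := sub_ne_zero.mpr (hw _ _ (mem_filter.mp hx).2)
  split_ifs
  · rw [← neg_sub (w x.1), div_neg, neg_div, neg_neg, div_mul_cancel₀ _ hx']
  · exact one_mul _

theorem symmetrization_identity_general {F : Type*} [Field F] (q : F) (n : ℕ)
    (w : Fin n → F) (hw : ∀ i j : Fin n, i ≠ j → w i ≠ q * w j) :
    ∑ σ : Equiv.Perm (Fin n),
        ∏ p ∈ univ.filter (fun p : Fin n × Fin n => p.1 < p.2 ∧ σ p.2 < σ p.1),
          (-(q * w p.1 - w p.2) / (q * w p.2 - w p.1))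
      = (∏ k ∈ Finset.range n, ∑ i ∈ Finset.range (k + 1), q ^ i) *
          ∏ p ∈ univ.filter (fun p : Fin n × Fin n => p.1 < p.2),
            (w p.1 - w p.2) / (w p.1 - q * w p.2) := by
  rw [← ltPairs]
  have hw' : ∀ i j, i < j → w i ≠ q * w j := fun i j h => hw i j h.ne
  have hfactor : ∀ x ∈ ltPairs n, w x.1 - q * w x.2 ≠ 0 := fun x hx =>
    sub_ne_zero.mpr (hw' _ _ (mem_filter.mp hx).2)
  refine mul_right_cancel₀ (prod_ne_zero_iff.mpr hfactor) ?_
  rw [sum_mul, sum_congr rfl fun σ _ => prod_inversions_mul_eq_inversionWeight hw' σ,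
    sum_inversionWeight, mul_assoc, ← prod_mul_distrib]
  exact congrArg _ (prod_congr rfl fun x hx => (div_mul_cancel₀ _ (hfactor x hx)).symm)

/-- Equation (5.1) of Wang–Waugh: the symmetrization identity
`∑_{σ ∈ S_n} ∏_{i<j, σ(i)>σ(j)} S(w_j, w_i) = [n]_q! · ∏_{i<j} (w_i − w_j)/(w_i − q·w_j)`,
where `S(a,b) = −(q·b − a)/(q·a − b)`, `[k]_q = 1 + q + ⋯ + q^{k−1}` and
`[n]_q! = [1]_q · [2]_q ⋯ [n]_q`. -/
theorem symmetrization_identity {F : Type*} [Field F] (q : F) (n : ℕ) (hn : 1 ≤ n)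
    (w : Fin n → F) (hw : ∀ i j : Fin n, i ≠ j → w i ≠ q * w j) :
    ∑ σ : Equiv.Perm (Fin n),
        ∏ p ∈ univ.filter (fun p : Fin n × Fin n => p.1 < p.2 ∧ σ p.2 < σ p.1),
          (-(q * w p.1 - w p.2) / (q * w p.2 - w p.1))
      = (∏ k ∈ Finset.range n, ∑ i ∈ Finset.range (k + 1), q ^ i) *
          ∏ p ∈ univ.filter (fun p : Fin n × Fin n => p.1 < p.2),
            (w p.1 - w p.2) / (w p.1 - q * w p.2) :=
  symmetrization_identity_general q n w hw
end

section
/- Let S be a countable set with a partial order and rank function ρ as described, and let T : S × S → ℝ be a stochastic matrix compatible with ρ. Let x, y, x', y' ∈ S with ρ(y) − ρ(x) = ρ(y') − ρ(x') = n for some integer n ≥ 1. For any state v let C(v) = { z : z ⋖ v }. Suppose there is a bijection ι : C(y) → C(y') such that T(z,y) = T(ι(z), y') for all z ∈ C(y), and such that T^{n−1}(x,z) = T^{n−1}(x', ι(z)) for all z ∈ C(y). Then T^n(x,y) = T^n(x',y'). (For a compatible chain, T^{ρ(y)−ρ(x)}(x,y) equals the probability ℙ_{x,H}(y) that the chain started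 at x ever hits y, so this gives the inductive property of the hitting-probability equivalence relation of Proposition 4.7(a).) -/
/-! Since `T` vanishes off the covering relation, `T^n(x, y)` is a sum over the states covered
by `y` only; `ι` reindexes the sum for `y` into the one for `y'` term by term. -/

open Classical

noncomputable def Tpow {S : Type*} (T : S → S → ℝ) : ℕ → S → S → ℝ
  | 0 => fun x y => if x = y then 1 else 0
  | n + 1 => fun x y => ∑' z, Tpow T n x z * T z y

section CovBySupported

variable {S : Type*} [PartialOrder S] {T : S → S → ℝ}

theorem eq_zero_of_not_covBy (hT_nonneg : ∀ x y : S, 0 ≤ T x y)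
    (hT_pos : ∀ x y : S, 0 < T x y → x ⋖ y) (v w : S) (h : ¬ v ⋖ w) : T v w = 0 :=
  ((hT_nonneg v w).lt_or_eq.resolve_left fun hpos => h (hT_pos v w hpos)).symm

theorem Tpow_succ_eq_tsum_covBy (hT : ∀ v w : S, ¬ v ⋖ w → T v w = 0) (m : ℕ) (a b : S) :
    Tpow T (m + 1) a b = ∑' z : {z : S // z ⋖ b}, Tpow T m a z * T z b := by
  refine (tsum_subtype_eq_of_support_subset fun z hz => ?_).symm
  by_contra hzb
  exact hz (mul_eq_zero_of_right _ (hT z b hzb))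

end CovBySupported

theorem Tpow_inductive_property_general {S : Type*} [PartialOrder S]
    (T : S → S → ℝ)
    (hT_nonneg : ∀ x y : S, 0 ≤ T x y)
    (hT_compat : ∀ x y : S, 0 < T x y ↔ x ⋖ y)
    (n : ℕ) (hn : 1 ≤ n) (x y x' y' : S)
    (ι : {z : S // z ⋖ y} ≃ {z : S // z ⋖ y'})
    (hι_T : ∀ z : {z : S // z ⋖ y}, T z.val y = T (ι z).val y')
    (hι_Tpow : ∀ z : {z : S // z ⋖ y}, Tpow T (n - 1) x z.val = Tpow T (n - 1) x' (ι z).val) :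
    Tpow T n x y = Tpow T n x' y' := by
  obtain ⟨m, rfl⟩ : ∃ m, n = m + 1 := ⟨n - 1, (Nat.sub_add_cancel hn).symm⟩
  rw [Nat.add_sub_cancel] at hι_Tpow
  have hT := eq_zero_of_not_covBy hT_nonneg fun v w => (hT_compat v w).mp
  rw [Tpow_succ_eq_tsum_covBy hT, Tpow_succ_eq_tsum_covBy hT,
    ← ι.tsum_eq fun w => Tpow T m x' w.val * T w.val y']
  exact tsum_congr fun z => by rw [hι_Tpow z, hι_T z]

/-- The inductive property of the hitting-probability equivalence relation of
Proposition 4.7(a): if `ρ(y) − ρ(x) = ρ(y') − ρ(x') = n ≥ 1` and there is a bijection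
`ι : C(y) → C(y')` between the sets of covered states matching both the one-step
probabilities into `y`, `y'` and the `(n−1)`-step probabilities from `x`, `x'`, then
`T^n(x,y) = T^n(x',y')`. -/
theorem Tpow_inductive_property {S : Type*} [Countable S] [PartialOrder S]
    (ρ : S → ℕ)
    (hρ_mono : ∀ x y : S, x < y → ρ x < ρ y)
    (hρ_cov : ∀ x y : S, x ⋖ y → ρ y = ρ x + 1)
    (T : S → S → ℝ)
    (hT_nonneg : ∀ x y : S, 0 ≤ T x y)
    (hT_sum : ∀ x : S, ∑' y, T x y = 1)
    (hT_compat : ∀ x y : S, 0 < T x y ↔ x ⋖ y)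
    (n : ℕ) (hn : 1 ≤ n) (x y x' y' : S)
    (hxy : ρ y = ρ x + n) (hxy' : ρ y' = ρ x' + n)
    (ι : {z : S // z ⋖ y} ≃ {z : S // z ⋖ y'})
    (hι_T : ∀ z : {z : S // z ⋖ y}, T z.val y = T (ι z).val y')
    (hι_Tpow : ∀ z : {z : S // z ⋖ y}, Tpow T (n - 1) x z.val = Tpow T (n - 1) x' (ι z).val) :
    Tpow T n x y = Tpow T n x' y' :=
  Tpow_inductive_property_general T hT_nonneg hT_compat n hn x y x' y' ι hι_T hι_Tpow
end

section
/- Let (Ω, 𝔽, ℙ) be a probability space, let V be a random variable with V ≥ 0 almost surely, and let E be an exponential random variable with rate λ > 0 that is independent of V. Let t > 0 and assume ℙ(V = t) = 0. Then ℙ( V < t and V + E > t ) = ℙ(V ≤ t) − e^{−λ t} · ∫₀ᵗ λ·e^{λ s}·ℙ(V ≤ s) ds. -/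
/-! By independence, conditioning on `V = v` gives
`ℙ(V < t < V + E) = 𝔼[e^{-λ(t - V)}; V < t]`. On the other side, Fubini turns
`∫₀ᵗ g'(s) ℙ(V ≤ s) ds` into `𝔼[g(t) - g(V); 0 ≤ V ≤ t]` (integration by parts against the
distribution function of `V`); with `g(s) = e^{λ s}` and `ℙ(V = t) = 0`, the two expressions match
after multiplying by `e^{-λ t}`. -/

open MeasureTheory Set

theorem ProbabilityTheory.IndepFun.measure_lt_lt_add_eq_setLIntegral {Ω : Type*}
    [MeasurableSpace Ω] {ℙ : Measure Ω} [IsFiniteMeasure ℙ] {V E : Ω → ℝ}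
    (hindep : ProbabilityTheory.IndepFun V E ℙ) (hV : Measurable V) (hE : Measurable E) (t : ℝ) :
    ℙ {ω | V ω < t ∧ t < V ω + E ω} = ∫⁻ v in Iio t, ℙ.map E (Ioi (t - v)) ∂ℙ.map V := by
  set S := {p : ℝ × ℝ | p.1 < t ∧ t < p.1 + p.2}
  have hS : MeasurableSet S :=
    (measurableSet_lt measurable_fst measurable_const).inter
      (measurableSet_lt measurable_const (measurable_fst.add measurable_snd))
  have hslice (v : ℝ) :
      ℙ.map E (Prod.mk v ⁻¹' S) = (Iio t).indicator (fun v ↦ ℙ.map E (Ioi (t - v))) v := by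
    by_cases hv : v < t
    · have : Prod.mk v ⁻¹' S = Ioi (t - v) := by ext e; simp [S, hv, sub_lt_iff_lt_add']
      simp [this, hv]
    · have : Prod.mk v ⁻¹' S = ∅ := by ext e; simp [S, hv]
      simp [this, hv]
  calc ℙ {ω | V ω < t ∧ t < V ω + E ω} = (ℙ.map V).prod (ℙ.map E) S := by
        rw [← (ProbabilityTheory.indepFun_iff_map_prod_eq_prod_map_map hV.aemeasurable
          hE.aemeasurable).mp hindep, Measure.map_apply (hV.prodMk hE) hS]
        rfl
    _ = ∫⁻ v, (Iio t).indicator (fun v ↦ ℙ.map E (Ioi (t - v))) v ∂ℙ.map V := by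
        simp only [Measure.prod_apply hS, hslice]
    _ = _ := lintegral_indicator measurableSet_Iio _

theorem ProbabilityTheory.IndepFun.measure_lt_lt_add_eq_setLIntegral_exp {Ω : Type*}
    [MeasurableSpace Ω] {ℙ : Measure Ω} [IsFiniteMeasure ℙ] {V E : Ω → ℝ}
    (hindep : ProbabilityTheory.IndepFun V E ℙ) (hV : Measurable V) (hE : Measurable E) {lam : ℝ}
    (hEexp : ∀ s : ℝ, 0 ≤ s → ℙ {ω | s < E ω} = ENNReal.ofReal (Real.exp (-lam * s))) (t : ℝ) :
    ℙ {ω | V ω < t ∧ t < V ω + E ω}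
      = ∫⁻ v in Iio t, ENNReal.ofReal (Real.exp (-lam * (t - v))) ∂ℙ.map V := by
  rw [hindep.measure_lt_lt_add_eq_setLIntegral hV hE]
  refine setLIntegral_congr_fun measurableSet_Iio fun v hv ↦ ?_
  rw [Measure.map_apply hE measurableSet_Ioi]
  exact hEexp _ (sub_nonneg.2 (le_of_lt hv))

theorem integral_mul_measureReal_Iic {μ : Measure ℝ} [IsFiniteMeasure μ] {f : ℝ → ℝ} {s : Set ℝ}
    (hf : IntegrableOn f s) :
    ∫ x in s, f x * μ.real (Iic x) = ∫ v, (∫ x in s ∩ Ici v, f x) ∂μ := by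
  have hint : Integrable (Function.uncurry fun x v ↦ (Iic x).indicator (fun _ ↦ f x) v)
      ((volume.restrict s).prod μ) := by
    have : (Function.uncurry fun x v ↦ (Iic x).indicator (fun _ ↦ f x) v)
        = {p : ℝ × ℝ | p.2 ≤ p.1}.indicator (fun p ↦ f p.1) := by
      ext p; by_cases h : p.2 ≤ p.1 <;> simp [Function.uncurry, h]
    rw [this]
    exact (hf.comp_fst μ).indicator (measurableSet_le measurable_snd measurable_fst)
  have hswap (v x : ℝ) : (Iic x).indicator (fun _ ↦ f x) v = (Ici v).indicator f x := by
    by_cases h : v ≤ x <;> simp [h]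
  calc ∫ x in s, f x * μ.real (Iic x)
      = ∫ x in s, ∫ v, (Iic x).indicator (fun _ ↦ f x) v ∂μ := by
        simp only [integral_indicator_const _ measurableSet_Iic, smul_eq_mul, mul_comm]
    _ = ∫ v, (∫ x in s, (Ici v).indicator f x) ∂μ := by
        rw [integral_integral_swap hint]
        simp only [hswap]
    _ = _ := by simp only [setIntegral_indicator measurableSet_Ici]

theorem integral_deriv_mul_measureReal_Iic {μ : Measure ℝ} [IsFiniteMeasure μ] {g g' : ℝ → ℝ}
    {a b : ℝ} (hab : a ≤ b) (hg : ∀ x ∈ Icc a b, HasDerivAt g (g' x) x)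
    (hg' : IntegrableOn g' (Icc a b)) (hμ : ∀ᵐ v ∂μ, a ≤ v) :
    ∫ x in a..b, g' x * μ.real (Iic x) = ∫ v in Icc a b, (g b - g v) ∂μ := by
  have hinner : ∀ v, a ≤ v →
      ∫ x in Icc a b ∩ Ici v, g' x = (Icc a b).indicator (fun v ↦ g b - g v) v := by
    intro v hav
    by_cases hvb : v ≤ b
    · have hset : Icc a b ∩ Ici v = Icc v b := by
        rw [← Ici_inter_Iic, inter_right_comm, Ici_inter_Ici, sup_eq_right.mpr hav, Ici_inter_Iic]
      rw [hset, integral_Icc_eq_integral_Ioc, ← intervalIntegral.integral_of_le hvb,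
        intervalIntegral.integral_eq_sub_of_hasDerivAt,
        indicator_of_mem (show v ∈ Icc a b from ⟨hav, hvb⟩)]
      · intro x hx
        rw [uIcc_of_le hvb] at hx
        exact hg x ⟨hav.trans hx.1, hx.2⟩
      · refine (hg'.mono_set ?_).intervalIntegrable
        rw [uIcc_of_le hvb]
        exact Icc_subset_Icc_left hav
    · have hset : Icc a b ∩ Ici v = ∅ :=
        eq_empty_of_forall_notMem fun _ hx ↦ hvb (hx.2.trans hx.1.2)
      simp [hset, hvb]
  rw [intervalIntegral.integral_of_le hab, ← integral_Icc_eq_integral_Ioc,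
    integral_mul_measureReal_Iic hg', integral_congr_ae (hμ.mono hinner),
    integral_indicator measurableSet_Icc]

theorem exp_holding_time_integration_by_parts_general {Ω : Type*} [MeasurableSpace Ω]
    (ℙ : Measure Ω) [IsProbabilityMeasure ℙ]
    (V E : Ω → ℝ) (hV : Measurable V) (hE : Measurable E)
    (hVnn : ∀ᵐ ω ∂ℙ, 0 ≤ V ω)
    (lam : ℝ)
    (hEexp : ∀ s : ℝ, 0 ≤ s → ℙ {ω | s < E ω} = ENNReal.ofReal (Real.exp (-lam * s)))
    (hindep : ProbabilityTheory.IndepFun V E ℙ)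
    (t : ℝ) (ht : 0 < t) (hVt : ℙ {ω | V ω = t} = 0) :
    (ℙ {ω | V ω < t ∧ t < V ω + E ω}).toReal
      = (ℙ {ω | V ω ≤ t}).toReal
        - Real.exp (-lam * t) *
            ∫ s in (0 : ℝ)..t, lam * Real.exp (lam * s) * (ℙ {ω | V ω ≤ s}).toReal := by
  set μ := ℙ.map V
  have hμ_nonneg : ∀ᵐ v ∂μ, 0 ≤ v := (ae_map_iff hV.aemeasurable measurableSet_Ici).mpr hVnn
  have hμ_Iic (s : ℝ) : ℙ {ω | V ω ≤ s} = μ (Iic s) :=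
    (Measure.map_apply hV measurableSet_Iic).symm
  have hIic : Iic t =ᵐ[μ] Icc 0 t := by
    rw [← Ici_inter_Iic]
    exact (inter_ae_eq_right_of_ae_eq_univ (ae_eq_univ.mpr hμ_nonneg)).symm
  have hIio : Iio t =ᵐ[μ] Icc 0 t :=
    (Iio_ae_eq_Iic' (by rwa [Measure.map_apply hV (measurableSet_singleton t)])).trans hIic
  have hLHS : (ℙ {ω | V ω < t ∧ t < V ω + E ω}).toReal
      = ∫ v in Icc 0 t, Real.exp (-lam * (t - v)) ∂μ := by
    rw [hindep.measure_lt_lt_add_eq_setLIntegral_exp hV hE hEexp, Measure.restrict_congr_set hIio,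
      integral_eq_lintegral_of_nonneg_ae (.of_forall fun _ ↦ (Real.exp_pos _).le) (by fun_prop)]
  have hRHS : ∫ s in (0 : ℝ)..t, lam * Real.exp (lam * s) * (ℙ {ω | V ω ≤ s}).toReal
      = ∫ v in Icc 0 t, (Real.exp (lam * t) - Real.exp (lam * v)) ∂μ := by
    simp only [hμ_Iic, ← measureReal_def]
    refine integral_deriv_mul_measureReal_Iic (g := fun s ↦ Real.exp (lam * s)) ht.le
      (fun x _ ↦ ?_) (by fun_prop : Continuous fun s ↦ lam * Real.exp (lam * s)).integrableOn_Icc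
      hμ_nonneg
    simpa [mul_comm] using ((hasDerivAt_id x).const_mul lam).exp
  have hscale :
      Real.exp (-lam * t) * ∫ v in Icc 0 t, (Real.exp (lam * t) - Real.exp (lam * v)) ∂μ
      = ∫ v in Icc 0 t, (1 - Real.exp (-lam * (t - v))) ∂μ := by
    rw [← integral_const_mul]
    congr with v
    rw [mul_sub, ← Real.exp_add, ← Real.exp_add]
    ring_nf
    simp
  rw [hLHS, hμ_Iic, measure_congr hIic, hRHS, hscale, integral_sub (integrable_const 1)
    (by fun_prop : Continuous fun v ↦ Real.exp (-lam * (t - v))).integrableOn_Icc,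
    setIntegral_const, smul_eq_mul, mul_one, measureReal_def]
  ring

/-- For `V ≥ 0` a.s. and `E` an exponential random variable with rate `λ > 0`
independent of `V`, if `ℙ(V = t) = 0` then
`ℙ(V < t, V + E > t) = ℙ(V ≤ t) − e^{−λt}·∫₀ᵗ λ·e^{λs}·ℙ(V ≤ s) ds`. -/
theorem exp_holding_time_integration_by_parts {Ω : Type*} [MeasurableSpace Ω]
    (ℙ : Measure Ω) [IsProbabilityMeasure ℙ]
    (V E : Ω → ℝ) (hV : Measurable V) (hE : Measurable E)
    (hVnn : ∀ᵐ ω ∂ℙ, 0 ≤ V ω)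
    (lam : ℝ) (hlam : 0 < lam)
    (hEexp : ∀ s : ℝ, 0 ≤ s → ℙ {ω | s < E ω} = ENNReal.ofReal (Real.exp (-lam * s)))
    (hindep : ProbabilityTheory.IndepFun V E ℙ)
    (t : ℝ) (ht : 0 < t) (hVt : ℙ {ω | V ω = t} = 0) :
    (ℙ {ω | V ω < t ∧ t < V ω + E ω}).toReal
      = (ℙ {ω | V ω ≤ t}).toReal
        - Real.exp (-lam * t) *
            ∫ s in (0 : ℝ)..t, lam * Real.exp (lam * s) * (ℙ {ω | V ω ≤ s}).toReal :=
  exp_holding_time_integration_by_parts_general ℙ V E hV hE hVnn lam hEexp hindep t ht hVt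
end

section
/- Let 0 < q < 1, N ≥ 2, R > 1, t ∈ ℝ, 1 ≤ k ≤ N−1, and integers M₁, …, M_N with M_k = M_{k+1}. Then the iterated circle integral over the circles |w₁| = R, …, |w_N| = R (all centered at the origin) of the function B(w₁,…,w_N) · ( q/w_k − 1/w_{k+1} ) · ∏_{j=1}^{N} (1 − w_j)^{−M_j − 1} · e^{−w_j t} equals 0. (The integrand is well defined on the contours: since R > 1 and 0 < q < 1, on the contours w_j ≠ 0, w_j ≠ 1, and w_i ≠ q·w_j for all i, j.) -/
open Finset

/-- `Bprod q w = ∏_{1 ≤ i < j ≤ N} (w_i − w_j)/(w_i − q·w_j)`. -/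
noncomputable def Bprod (q : ℂ) {N : ℕ} (w : Fin N → ℂ) : ℂ :=
  ∏ p ∈ univ.filter (fun p : Fin N × Fin N => p.1 < p.2),
    (w p.1 - w p.2) / (w p.1 - q * w p.2)

/-- Iterated circle integral: `itCircleInt n c r f` integrates the `j`-th variable over
the circle of center `c j` and radius `r j`, for `j = 1, …, n`. -/
noncomputable def itCircleInt : (n : ℕ) → (Fin n → ℂ) → (Fin n → ℝ) → ((Fin n → ℂ) → ℂ) → ℂ
  | 0, _, _, f => f (fun i => i.elim0)
  | n + 1, c, r, f =>
      ∮ z in C(c 0, r 0),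
        itCircleInt n (fun i => c i.succ) (fun i => r i.succ) (fun v => f (Fin.cons z v))


/-! On the contours, the factor `q / w_k - 1 / w_{k+1}` cancels the denominator of the
`(k, k+1)` factor of `B`, leaving `(w_{k+1} - w_k) / (w_k w_{k+1})`. Swapping the adjacent
variables `w_k, w_{k+1}` only permutes the other factors of `B`, and fixes the last product
because `M_k = M_{k+1}`; so the integrand is antisymmetric under this swap. The iterated circle
integral is a torus integral, which is invariant under permuting the variables, hence it is
zero. -/

open Complex Set MeasureTheory

theorem torusMap_cons {n : ℕ} (c : Fin (n + 1) → ℂ) (R : Fin (n + 1) → ℝ) (θ : ℝ)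
    (φ : Fin n → ℝ) :
    torusMap c R (Fin.cons θ φ) =
      Fin.cons (circleMap (c 0) (R 0) θ) (torusMap (c ∘ Fin.succ) (R ∘ Fin.succ) φ) := by
  ext i
  refine Fin.cases ?_ (fun j => ?_) i <;> rfl

@[fun_prop]
theorem continuous_torusMap {n : ℕ} (c : Fin n → ℂ) (R : Fin n → ℝ) :
    Continuous (torusMap c R) :=
  continuous_pi fun i => by unfold torusMap; fun_prop

theorem norm_torusMap_zero_apply {n : ℕ} (R : Fin n → ℝ) (θ : Fin n → ℝ) (j : Fin n) :
    ‖torusMap (fun _ => 0) R θ j‖ = |R j| := by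
  simp [torusMap, norm_exp_ofReal_mul_I]

theorem itCircleInt_eq_torusIntegral {n : ℕ} (c : Fin n → ℂ) (R : Fin n → ℝ)
    (f : (Fin n → ℂ) → ℂ) (hf : Continuous fun θ => f (torusMap c R θ)) :
    itCircleInt n c R f = ∯ x in T(c, R), f x := by
  induction n with
  | zero => simp [itCircleInt, Subsingleton.elim c fun i => i.elim0]
  | succ n ih =>
    rw [torusIntegral_succ hf.integrableOn_Icc, itCircleInt, circleIntegral, circleIntegral]
    refine intervalIntegral.integral_congr fun θ _ => congrArg _ (ih _ _ _ ?_)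
    have := hf.comp ((continuous_const (y := θ)).finCons continuous_id)
    simpa only [Function.comp_def, id, torusMap_cons] using this

theorem setIntegral_Icc_const_comp_perm {ι E : Type*} [Fintype ι] [NormedAddCommGroup E]
    [NormedSpace ℝ E] (σ : Equiv.Perm ι) (g : (ι → ℝ) → E) (a b : ℝ) :
    ∫ θ in Icc (fun _ => a) (fun _ => b), g (θ ∘ σ) =
      ∫ θ in Icc (fun _ => a) (fun _ => b), g θ := by
  have hσ := volume_measurePreserving_piCongrLeft (fun _ : ι => ℝ) σ.symm
  have happ : ∀ θ : ι → ℝ, MeasurableEquiv.piCongrLeft (fun _ => ℝ) σ.symm θ = θ ∘ σ := by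
    intro θ; ext i; simp [MeasurableEquiv.coe_piCongrLeft, Equiv.piCongrLeft_apply_eq_cast]
  have hpre : MeasurableEquiv.piCongrLeft (fun _ : ι => ℝ) σ.symm ⁻¹' Icc (fun _ => a) (fun _ => b)
      = Icc (fun _ => a) (fun _ => b) := by
    ext θ
    simp only [Set.mem_preimage, happ, Set.mem_Icc, Pi.le_def, Function.comp_apply]
    exact and_congr (σ.forall_congr_right (q := fun i => a ≤ θ i))
      (σ.forall_congr_right (q := fun i => θ i ≤ b))
  simpa only [hpre, happ] using hσ.setIntegral_preimage_emb
    (MeasurableEquiv.measurableEmbedding _) g (Icc (fun _ => a) (fun _ => b))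

theorem torusIntegral_comp_perm {n : ℕ} {E : Type*} [NormedAddCommGroup E] [NormedSpace ℂ E]
    (σ : Equiv.Perm (Fin n)) (f : (Fin n → ℂ) → E) (c : Fin n → ℂ) (R : Fin n → ℝ) :
    (∯ x in T(c ∘ σ, R ∘ σ), f (x ∘ σ.symm)) = ∯ x in T(c, R), f x := by
  refine Eq.trans ?_ (setIntegral_Icc_const_comp_perm σ.symm _ 0 (2 * Real.pi))
  refine setIntegral_congr_fun measurableSet_Icc fun θ _ => ?_
  congr 1
  · exact (σ.symm.prod_comp fun i => (R (σ i) * exp (θ i * I) * I : ℂ)).symm.trans (by simp)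
  · refine congrArg f (funext fun i => ?_)
    simp [torusMap]

theorem torusIntegral_eq_zero_of_comp_perm_eq_neg {n : ℕ} {E : Type*} [NormedAddCommGroup E]
    [NormedSpace ℂ E] (σ : Equiv.Perm (Fin n)) {f : (Fin n → ℂ) → E} {c : Fin n → ℂ}
    {R : Fin n → ℝ} (hc : c ∘ σ = c) (hR : R ∘ σ = R)
    (hf : ∀ θ, f (torusMap c R θ ∘ σ) = -f (torusMap c R θ)) :
    (∯ x in T(c, R), f x) = 0 := by
  have h := torusIntegral_comp_perm σ.symm f c R
  rw [(σ.comp_symm_eq c c).2 hc.symm, (σ.comp_symm_eq R R).2 hR.symm, Equiv.symm_symm] at h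
  have hneg : (∯ x in T(c, R), f (x ∘ σ)) = ∯ x in T(c, R), -f x := by
    simp only [torusIntegral, hf]
  rw [hneg, torusIntegral_neg] at h
  have h2 : (2 : ℂ) • (∯ x in T(c, R), f x) = 0 := by
    rw [two_smul]
    nth_rw 1 [← h]
    exact neg_add_cancel _
  exact (smul_eq_zero.1 h2).resolve_left two_ne_zero

theorem prod_comp_perm_of_comp_eq {ι α β M : Type*} [Fintype ι] [CommMonoid M]
    (σ : Equiv.Perm ι) {m : ι → α} (hm : m ∘ σ = m) (g : α → β → M) (w : ι → β) :
    ∏ i, g (m i) (w (σ i)) = ∏ i, g (m i) (w i) := by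
  conv_lhs => rw [← hm]
  exact Equiv.prod_comp σ fun i => g (m i) (w i)

theorem prod_erase_comp_swap_of_adjacent {M : Type*} [CommMonoid M] {N : ℕ} {a b : Fin N}
    (hab : (b : ℕ) = a + 1) (g : Fin N → Fin N → M) :
    ∏ p ∈ (univ.filter fun p : Fin N × Fin N => p.1 < p.2).erase (a, b),
        g (Equiv.swap a b p.1) (Equiv.swap a b p.2) =
      ∏ p ∈ (univ.filter fun p : Fin N × Fin N => p.1 < p.2).erase (a, b), g p.1 p.2 := by
  refine Finset.prod_equiv ((Equiv.swap a b).prodCongr (Equiv.swap a b)) (fun p => ?_)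
    fun _ _ => rfl
  obtain ⟨i, j⟩ := p
  simp only [Finset.mem_erase, Finset.mem_filter, Finset.mem_univ, true_and, ne_eq,
    Prod.ext_iff, Equiv.prodCongr_apply, Prod.map, Equiv.swap_apply_def, Fin.lt_def, Fin.ext_iff]
  split_ifs <;> omega

theorem Bprod_eq_mul_prod_erase (q : ℂ) {N : ℕ} (w : Fin N → ℂ) {a b : Fin N} (hab : a < b) :
    Bprod q w = (w a - w b) / (w a - q * w b) *
      ∏ p ∈ (univ.filter fun p : Fin N × Fin N => p.1 < p.2).erase (a, b),
        (w p.1 - w p.2) / (w p.1 - q * w p.2) := by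
  unfold Bprod
  exact (Finset.mul_prod_erase _ _ (Finset.mem_filter.2 ⟨Finset.mem_univ (a, b), hab⟩)).symm

theorem Bprod_comp_swap_mul_eq_neg (q : ℂ) {N : ℕ} {a b : Fin N} (hab : (b : ℕ) = a + 1)
    {w : Fin N → ℂ} (ha : w a ≠ 0) (hb : w b ≠ 0) (hwab : w a - q * w b ≠ 0)
    (hwba : w b - q * w a ≠ 0) :
    Bprod q (w ∘ Equiv.swap a b) * (q / w b - 1 / w a) = -(Bprod q w * (q / w a - 1 / w b)) := by
  have cancel : ∀ {x y : ℂ}, x ≠ 0 → y ≠ 0 → x - q * y ≠ 0 →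
      (x - y) / (x - q * y) * (q / x - 1 / y) = (y - x) / (x * y) := by
    intro x y hx hy hxy
    rw [div_sub_div _ _ hx hy, div_mul_div_comm,
      div_eq_div_iff (mul_ne_zero hxy (mul_ne_zero hx hy)) (mul_ne_zero hx hy)]
    ring
  have hlt : a < b := by rw [Fin.lt_def]; omega
  rw [Bprod_eq_mul_prod_erase q _ hlt, Bprod_eq_mul_prod_erase q w hlt]
  simp only [Function.comp_apply, Equiv.swap_apply_left, Equiv.swap_apply_right]
  rw [prod_erase_comp_swap_of_adjacent hab fun i j => (w i - w j) / (w i - q * w j),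
    mul_right_comm, cancel hb ha hwba, mul_right_comm, cancel ha hb hwab]
  ring

theorem Continuous.Bprod {X : Type*} [TopologicalSpace X] (q : ℂ) {N : ℕ} {w : X → Fin N → ℂ}
    (hw : Continuous w) (hne : ∀ x i j, w x i - q * w x j ≠ 0) :
    Continuous fun x => _root_.Bprod q (w x) :=
  continuous_finsetProd _ fun p _ =>
    Continuous.div (by fun_prop) (by fun_prop) fun x => hne x p.1 p.2

theorem sub_mul_ne_zero_of_norm_eq {x y q : ℂ} (hxy : ‖x‖ = ‖y‖) (hy : y ≠ 0) (hq : ‖q‖ < 1) :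
    x - q * y ≠ 0 := by
  intro h
  have hnorm := congrArg norm (sub_eq_zero.1 h)
  rw [norm_mul, hxy] at hnorm
  nlinarith [norm_pos_iff.2 hy]

/-- The 0-indexed slots `⟨k - 1⟩`, `⟨k⟩` are the paper's `w_k`, `w_{k+1}`. -/
theorem circleIntegral_antisym_factor_eq_zero (q : ℝ) (hq0 : 0 < q) (hq1 : q < 1)
    (N : ℕ) (R : ℝ) (hR : 1 < R) (t : ℝ)
    (k : ℕ) (hk1 : 1 ≤ k) (hk2 : k ≤ N - 1)
    (M : Fin N → ℤ) (hM : M ⟨k - 1, by omega⟩ = M ⟨k, by omega⟩) :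
    itCircleInt N (fun _ => 0) (fun _ => R)
      (fun w => Bprod (q : ℂ) w *
        ((q : ℂ) / w ⟨k - 1, by omega⟩ - 1 / w ⟨k, by omega⟩) *
        ∏ j : Fin N, ((1 - w j) ^ (-(M j) - 1) * Complex.exp (-(w j) * (t : ℂ))))
      = 0 := by
  set a : Fin N := ⟨k - 1, by omega⟩
  set b : Fin N := ⟨k, by omega⟩
  have hab : (b : ℕ) = a + 1 := by simp only [a, b]; omega
  set z := torusMap (fun _ : Fin N => (0 : ℂ)) fun _ => R
  have hz : ∀ θ j, ‖z θ j‖ = R := fun θ j => by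
    rw [norm_torusMap_zero_apply, abs_of_pos (zero_lt_one.trans hR)]
  have hz0 : ∀ θ j, z θ j ≠ 0 := fun θ j h => by
    have := hz θ j; rw [h, norm_zero] at this; linarith
  have hz1 : ∀ θ j, 1 - z θ j ≠ 0 := fun θ j h => by
    have := hz θ j; rw [← sub_eq_zero.1 h, norm_one] at this; linarith
  have hzq : ∀ θ i j, z θ i - q * z θ j ≠ 0 := fun θ i j =>
    sub_mul_ne_zero_of_norm_eq ((hz θ i).trans (hz θ j).symm) (hz0 θ j)
      (by rwa [Complex.norm_real, Real.norm_of_nonneg hq0.le])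
  have hzc : Continuous z := continuous_torusMap _ _
  rw [itCircleInt_eq_torusIntegral _ _ _ ?cont]
  case cont =>
    refine ((hzc.Bprod _ hzq).mul ?_).mul (continuous_finsetProd _ fun j _ => ?_)
    · exact (continuous_const.div (by fun_prop) (hz0 · a)).sub
        (continuous_const.div (by fun_prop) (hz0 · b))
    · exact ((continuous_const.sub (by fun_prop)).zpow₀ _ fun θ => .inl (hz1 θ j)).mul
        (by fun_prop)
  have hMσ : M ∘ Equiv.swap a b = M := by simp [Equiv.comp_swap_eq_update, hM]
  refine torusIntegral_eq_zero_of_comp_perm_eq_neg (Equiv.swap a b) rfl rfl fun θ => ?_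
  simp only [Function.comp_apply, Equiv.swap_apply_left, Equiv.swap_apply_right]
  rw [prod_comp_perm_of_comp_eq _ hMσ (fun m x => (1 - x) ^ (-m - 1) * exp (-x * t)),
    Bprod_comp_swap_mul_eq_neg _ hab (hz0 θ a) (hz0 θ b) (hzq θ a b) (hzq θ b a), neg_mul]
end
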